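/- Let $k \in \mathbb{N}$ and $h_1, h_2 \in \mathbb{Z}$ with $\gcd(h_1,k) = \gcd(h_2,k) = 1$. Then $\sum_{a=1}^{k-1} ((a h_1/k))((a h_2/k)) = \frac{1}{4k} \sum_{a=1}^{k-1} \cot(\pi a h_1/k) \cot(\pi a h_2/k)$. -/

import Mathlib

open scoped Classical

/-- The sawtooth function `((x))`. -/
noncomputable def saw (x : ℝ) : ℝ :=
  if ∃ m : ℤ, x = m then 0 else Int.fract x - 1 / 2

/-- The cotangent function. -/
noncomputable def cot (x : ℝ) : ℝ := Real.cos x / Real.sin x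

/-!
The finite Fourier expansion `((m/k)) = -(1/2k) ∑_{b<k} cot (πb/k) sin (2πmb/k)` and its
companion `∑_{a<k} ((a/k)) sin (2πma/k) = -(1/2) cot (πm/k)` give, after exchanging the order of
summation, `∑_{a<k} ((ah/k)) ((a/k)) = (1/4k) ∑_{a<k} cot (πah/k) cot (πa/k)` for every integer `h`.
The substitution `a ↦ a h₂⁻¹` modulo `k` reduces the theorem to this identity with
`h = h₁ h₂⁻¹`. Terms with `k ∣ m` need no separate treatment: `((m/k)) = 0`, and `cot (πm/k) = 0`
because `x / 0 = 0`.
-/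

open Real hiding cot
open Finset Function

lemma saw_add_intCast (x : ℝ) (n : ℤ) : saw (x + n) = saw x := by
  have hint : (∃ m : ℤ, x + n = m) ↔ ∃ m : ℤ, x = m :=
    ⟨fun ⟨m, hm⟩ => ⟨m - n, by push_cast; linarith⟩,
      fun ⟨m, hm⟩ => ⟨m + n, by push_cast; linarith⟩⟩
  simp only [saw, hint, Int.fract_add_intCast]

lemma saw_zero : saw 0 = 0 := if_pos ⟨0, by simp⟩

lemma saw_natCast_div {j k : ℕ} (hj : 0 < j) (hjk : j < k) : saw (j / k) = j / k - 1 / 2 := by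
  have hk : (0 : ℝ) < k := by exact_mod_cast hj.trans hjk
  have h0 : (0 : ℝ) < j / k := by positivity
  have h1 : (j : ℝ) / k < 1 := (div_lt_one hk).2 (by exact_mod_cast hjk)
  have hnot : ¬ ∃ m : ℤ, (j : ℝ) / k = m := by
    rintro ⟨m, hm⟩
    rw [hm] at h0 h1
    norm_cast at h0 h1
    omega
  rw [saw, if_neg hnot, Int.fract_eq_self.2 ⟨h0.le, h1⟩]

lemma cot_add_int_mul_pi (x : ℝ) (n : ℤ) : cot (x + n * π) = cot x := by
  rw [cot, cot, sin_add_int_mul_pi, cos_add_int_mul_pi,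
    mul_div_mul_left _ _ (zpow_ne_zero n (by norm_num : (-1 : ℝ) ≠ 0))]

lemma cot_int_mul_pi (n : ℤ) : cot (n * π) = 0 := by
  rw [cot, sin_int_mul_pi, div_zero]

lemma cot_mul_sin_two_mul {x : ℝ} (hx : sin x ≠ 0) (j : ℕ) :
    cot x * sin (2 * j * x) = ∑ l ∈ range j, (cos (2 * l * x) + cos (2 * (l + 1) * x)) := by
  have hstep : ∀ l : ℕ, cot x * (sin (2 * (l + 1 : ℕ) * x) - sin (2 * l * x))
      = cos (2 * l * x) + cos (2 * (l + 1) * x) := by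
    intro l
    have hcot : cot x * sin x = cos x := div_mul_cancel₀ _ hx
    push_cast
    rw [show 2 * (l + 1) * x = (2 * l + 1) * x + x by ring,
      show 2 * l * x = (2 * l + 1) * x - x by ring, sin_add, sin_sub, cos_add, cos_sub]
    linear_combination 2 * cos ((2 * l + 1) * x) * hcot
  rw [← sum_congr rfl fun l _ => hstep l, ← mul_sum, sum_range_sub (fun l => sin (2 * l * x))]
  simp

lemma two_mul_sin_half_mul_sum_mul_sin (θ : ℝ) (n : ℕ) :
    2 * sin (θ / 2) * ∑ a ∈ range n, a * sin (θ * a)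
      = ∑ a ∈ range n, cos (θ * a + θ / 2) - n * cos (θ * n - θ / 2) := by
  induction n with
  | zero => simp
  | succ n ih =>
    rw [sum_range_succ, sum_range_succ, mul_add, ih]
    push_cast
    rw [show θ * (n + 1) - θ / 2 = θ * n + θ / 2 by ring]
    simp only [cos_add, cos_sub]
    ring

lemma sum_Icc_one_sub_one_eq_sum_range {M : Type*} [AddCommMonoid M] {f : ℕ → M} (hf : f 0 = 0)
    (k : ℕ) : ∑ a ∈ Icc 1 (k - 1), f a = ∑ a ∈ range k, f a := by
  rcases k with _ | k
  · simp
  · rw [sum_range_succ', hf, add_zero, ← Ico_add_one_right_eq_Icc, sum_Ico_eq_sum_range]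
    simp [add_comm]

lemma Function.Periodic.eq_of_intModEq {M : Type*} {f : ℤ → M} {c : ℤ} (hf : Periodic f c)
    {a b : ℤ} (h : a ≡ b [ZMOD c]) : f a = f b := by
  obtain ⟨t, ht⟩ := h.dvd
  rw [show b = a + t * c by linear_combination ht]
  exact (hf.int_mul t a).symm

lemma Function.Periodic.comp_mul_right {M : Type*} {f : ℤ → M} {c : ℤ} (hf : Periodic f c)
    (h : ℤ) : Periodic (fun m => f (m * h)) c := fun m => by
  simpa [add_mul, mul_comm c] using hf.int_mul h (m * h)

section

variable {k : ℕ} [NeZero k]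

lemma sum_range_eq_sum_zmod {M : Type*} [AddCommMonoid M] (f : ℕ → M) :
    ∑ a ∈ range k, f a = ∑ x : ZMod k, f x.val := by
  obtain ⟨n, rfl⟩ := Nat.exists_eq_succ_of_ne_zero (NeZero.ne k)
  exact (Fin.sum_univ_eq_sum_range f _).symm

lemma sum_range_comp_mul_of_isCoprime {M : Type*} [AddCommMonoid M] {f : ℤ → M}
    (hf : Periodic f k) {u : ℤ} (hu : IsCoprime u k) :
    ∑ a ∈ range k, f (a * u) = ∑ a ∈ range k, f a := by
  have hval : ∀ m : ℤ, f m = f ((m : ZMod k).val) := fun m => by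
    rw [ZMod.val_intCast]
    exact hf.eq_of_intModEq (Int.mod_modEq m k).symm
  rw [sum_range_eq_sum_zmod (fun a => f (a * u)), sum_range_eq_sum_zmod (fun a => f a)]
  refine Fintype.sum_equiv (Units.mulRight (ZMod.unitOfIsCoprime u hu)) _ _ fun x => ?_
  rw [hval]
  simp

lemma sum_range_mul_mul_eq_of_modEq {R : Type*} [NonUnitalNonAssocSemiring R] {F G : ℤ → R}
    (hF : Periodic F k) (hG : Periodic G k) {h₂ w : ℤ} (hw : h₂ * w ≡ 1 [ZMOD k]) (h₁ : ℤ) :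
    ∑ a ∈ range k, F (a * h₁) * G (a * h₂) = ∑ a ∈ range k, F (a * (h₁ * w)) * G a := by
  obtain ⟨t, ht⟩ := hw.symm.dvd
  have hwk : IsCoprime w k := ⟨h₂, -t, by linear_combination ht⟩
  rw [← sum_range_comp_mul_of_isCoprime (f := fun m => F (m * h₁) * G (m * h₂))
    ((hF.comp_mul_right h₁).mul (hG.comp_mul_right h₂)) hwk]
  refine sum_congr rfl fun a _ => ?_
  have hmod : (a : ℤ) * w * h₂ ≡ a [ZMOD k] :=
    Int.modEq_iff_dvd.2 ⟨-(a * t), by linear_combination -(a : ℤ) * ht⟩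
  rw [hG.eq_of_intModEq hmod]
  ring_nf

lemma periodic_saw_intCast_div : Periodic (fun m : ℤ => saw (m / k)) k := fun m => by
  simp only
  rw [Int.cast_add, Int.cast_natCast, add_div, div_self (NeZero.ne _), ← Int.cast_one,
    saw_add_intCast]

lemma periodic_cot_pi_mul_intCast_div : Periodic (fun m : ℤ => cot (π * m / k)) k := fun m => by
  have hk : (k : ℝ) ≠ 0 := NeZero.ne _
  simp only
  rw [Int.cast_add, Int.cast_natCast, show π * (m + k) / k = π * m / k + (1 : ℤ) * π by
    push_cast; field_simp, cot_add_int_mul_pi]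

lemma sin_pi_mul_div_ne_zero {m : ℤ} (hm : ¬ (k : ℤ) ∣ m) : sin (π * m / k) ≠ 0 := by
  have hk : (k : ℝ) ≠ 0 := NeZero.ne _
  rw [Ne, sin_eq_zero_iff]
  rintro ⟨n, hn⟩
  refine hm ⟨n, ?_⟩
  field_simp at hn
  exact_mod_cast (by linear_combination -hn : (m : ℝ) = k * n)

lemma sum_range_cos_eq_zero {m : ℤ} (hm : ¬ (k : ℤ) ∣ m) (φ : ℝ) :
    ∑ a ∈ range k, cos (2 * π * m / k * a + φ) = 0 := by
  have hk : (k : ℝ) ≠ 0 := NeZero.ne _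
  have h := sin_mul_sum_cos k (2 * π * m / k) φ
  rw [show (k : ℝ) * (2 * π * m / k) / 2 = m * π by field_simp, sin_int_mul_pi, zero_mul,
    show 2 * π * m / k / 2 = π * m / k by ring] at h
  exact (mul_eq_zero.1 h).resolve_left (sin_pi_mul_div_ne_zero hm)

lemma sum_range_sin_eq_zero {m : ℤ} (hm : ¬ (k : ℤ) ∣ m) :
    ∑ a ∈ range k, sin (2 * π * m / k * a) = 0 := by
  simpa [← sub_eq_add_neg, cos_sub_pi_div_two] using sum_range_cos_eq_zero hm (-(π / 2))

lemma sum_range_cos_eq_ite {l : ℕ} (hl : l < k) :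
    ∑ b ∈ range k, cos (2 * π * l / k * b) = if l = 0 then (k : ℝ) else 0 := by
  split_ifs with h
  · simp [h]
  · have hl' : ¬ (k : ℤ) ∣ l := by
      exact_mod_cast Nat.not_dvd_of_pos_of_lt (Nat.pos_of_ne_zero h) hl
    simpa using sum_range_cos_eq_zero hl' 0

lemma sum_saw_mul_sin (m : ℤ) :
    ∑ a ∈ range k, saw (a / k) * sin (2 * π * m * a / k) = -(1 / 2) * cot (π * m / k) := by
  have hk : (k : ℝ) ≠ 0 := NeZero.ne _
  by_cases hm : (k : ℤ) ∣ m
  · obtain ⟨t, rfl⟩ := hm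
    rw [show π * ((k * t : ℤ) : ℝ) / k = t * π by push_cast; field_simp, cot_int_mul_pi, mul_zero]
    refine sum_eq_zero fun a _ => ?_
    rw [show 2 * π * ((k * t : ℤ) : ℝ) * a / k = (2 * t * a : ℤ) * π by push_cast; field_simp,
      sin_int_mul_pi, mul_zero]
  · set θ := 2 * π * m / k with hθ
    have hterm : ∀ a ∈ range k,
        saw (a / k) * sin (2 * π * m * a / k)
          = 1 / k * (a * sin (θ * a)) - 1 / 2 * sin (θ * a) := by
      intro a ha
      rw [show 2 * π * m * a / k = θ * a by ring]
      rcases a.eq_zero_or_pos with rfl | ha0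
      · simp
      · rw [saw_natCast_div ha0 (mem_range.1 ha)]
        ring
    have hcos : cos (θ * k - θ / 2) = cos (θ / 2) := by
      rw [show θ * k = m * (2 * π) by rw [hθ]; field_simp, cos_int_mul_two_pi_sub]
    have habel := two_mul_sin_half_mul_sum_mul_sin θ k
    rw [sum_range_cos_eq_zero hm, hcos] at habel
    have hs : sin (θ / 2) ≠ 0 := by
      rw [show θ / 2 = π * m / k by ring]
      exact sin_pi_mul_div_ne_zero hm
    have hsum :
        ∑ a ∈ range k, a * sin (θ * a) = -(k * cos (θ / 2)) / (2 * sin (θ / 2)) := by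
      rw [eq_div_iff (mul_ne_zero two_ne_zero hs)]
      linear_combination habel
    rw [sum_congr rfl hterm, sum_sub_distrib, ← mul_sum, ← mul_sum, sum_range_sin_eq_zero hm,
      hsum, cot, show π * m / k = θ / 2 by ring]
    field_simp
    ring

lemma sum_cot_mul_sin {j : ℕ} (hj : 0 < j) (hjk : j < k) :
    ∑ b ∈ range k, cot (π * b / k) * sin (2 * π * j * b / k) = k - 2 * j := by
  have hk : (0 : ℝ) < k := by exact_mod_cast hj.trans hjk
  -- at `b = 0` the expansion of `cot_mul_sin_two_mul` gives `2 j`, not `cot 0 * sin 0 = 0`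
  have hterm : ∀ b ∈ range k, cot (π * b / k) * sin (2 * π * j * b / k)
      = ∑ l ∈ range j, (cos (2 * π * l / k * b) + cos (2 * π * (l + 1 : ℕ) / k * b))
        - if b = 0 then (2 * j : ℝ) else 0 := by
    intro b hb
    rcases b.eq_zero_or_pos with rfl | hb0
    · simp [cot, two_mul]
    · have hx0 : 0 < π * b / k := by positivity
      have hxπ : π * b / k < π := by
        rw [div_lt_iff₀ hk]
        exact mul_lt_mul_of_pos_left (by exact_mod_cast mem_range.1 hb) pi_pos
      rw [if_neg hb0.ne', sub_zero, show 2 * π * j * b / k = 2 * j * (π * b / k) by ring,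
        cot_mul_sin_two_mul (sin_pos_of_pos_of_lt_pi hx0 hxπ).ne']
      refine sum_congr rfl fun l _ => ?_
      push_cast
      ring_nf
  rw [sum_congr rfl hterm, sum_sub_distrib, sum_comm, sum_ite_eq' (range k) 0,
    if_pos (by simpa using hj.trans hjk)]
  have hinner : ∀ l ∈ range j, ∑ b ∈ range k,
      (cos (2 * π * l / k * b) + cos (2 * π * (l + 1 : ℕ) / k * b))
        = if l = 0 then (k : ℝ) else 0 := by
    intro l hl
    have hlk : l + 1 < k := by have := mem_range.1 hl; omega
    rw [sum_add_distrib, sum_range_cos_eq_ite (Nat.lt_of_succ_lt hlk), sum_range_cos_eq_ite hlk,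
      if_neg l.succ_ne_zero, add_zero]
  rw [sum_congr rfl hinner, sum_ite_eq' (range j) 0, if_pos (by simpa using hj)]

lemma saw_intCast_div_eq_sum_cot_mul_sin (m : ℤ) :
    saw (m / k) = -(1 / (2 * k)) * ∑ b ∈ range k, cot (π * b / k) * sin (2 * π * m * b / k) := by
  have hk : (k : ℝ) ≠ 0 := NeZero.ne _
  obtain ⟨j, hj⟩ : ∃ j : ℕ, m % k = j :=
    Int.eq_ofNat_of_zero_le (Int.emod_nonneg m (Int.natCast_ne_zero.2 (NeZero.ne k)))
  have hjk : j < k := by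
    have := Int.emod_lt_of_pos m (Int.natCast_pos.2 (NeZero.pos k))
    omega
  have hm : (m : ℝ) = j + (m / k : ℤ) * k := by
    exact_mod_cast (by rw [← hj]; exact (Int.emod_add_ediv_mul m k).symm)
  have hsaw : saw (m / k) = saw (j / k) := by
    rw [hm, add_div, mul_div_cancel_right₀ _ hk, saw_add_intCast]
  have hsin : ∀ b : ℕ, sin (2 * π * m * b / k) = sin (2 * π * j * b / k) := fun b => by
    rw [hm, show 2 * π * (j + (m / k : ℤ) * k) * b / k
        = 2 * π * j * b / k + (b * (m / k) : ℤ) * (2 * π) by push_cast; field_simp,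
      sin_add_int_mul_two_pi]
  rw [hsaw, sum_congr rfl fun b _ => by rw [hsin b]]
  rcases j.eq_zero_or_pos with rfl | hj0
  · simp [saw_zero]
  · rw [sum_cot_mul_sin hj0 hjk, saw_natCast_div hj0 hjk]
    field_simp
    ring

lemma sum_saw_mul_saw (h : ℤ) :
    ∑ a ∈ range k, saw (a * h / k) * saw (a / k)
      = 1 / (4 * k) * ∑ a ∈ range k, cot (π * a * h / k) * cot (π * a / k) := by
  have hk : (k : ℝ) ≠ 0 := NeZero.ne _
  calc ∑ a ∈ range k, saw (a * h / k) * saw (a / k)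
      = ∑ a ∈ range k, ∑ b ∈ range k,
          -(1 / (2 * k)) * cot (π * b / k) * (saw (a / k) * sin (2 * π * (b * h : ℤ) * a / k)) := by
        refine sum_congr rfl fun a _ => ?_
        rw [show (a * h / k : ℝ) = ((a * h : ℤ) : ℝ) / k by push_cast; ring,
          saw_intCast_div_eq_sum_cot_mul_sin, mul_sum, sum_mul]
        refine sum_congr rfl fun b _ => ?_
        push_cast
        ring_nf
    _ = -(1 / (2 * k)) *
          ∑ b ∈ range k, cot (π * b / k) * (-(1 / 2) * cot (π * (b * h : ℤ) / k)) := by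
        rw [sum_comm, mul_sum]
        refine sum_congr rfl fun b _ => ?_
        rw [← sum_saw_mul_sin, mul_sum, mul_sum]
        refine sum_congr rfl fun a _ => ?_
        ring
    _ = 1 / (4 * k) * ∑ a ∈ range k, cot (π * a * h / k) * cot (π * a / k) := by
        rw [mul_sum, mul_sum]
        refine sum_congr rfl fun b _ => ?_
        push_cast
        field_simp
        ring_nf

end

theorem dedekind_homogeneous_general (k : ℕ) (hk : 0 < k) (h₁ h₂ : ℤ)
    (hco₂ : Int.gcd h₂ k = 1) :
    ∑ a ∈ Finset.Icc 1 (k - 1), saw (a * (h₁ : ℝ) / k) * saw (a * (h₂ : ℝ) / k)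
      = 1 / (4 * k) *
          ∑ a ∈ Finset.Icc 1 (k - 1), cot (Real.pi * a * (h₁ : ℝ) / k) * cot (Real.pi * a * (h₂ : ℝ) / k) := by
  have : NeZero k := ⟨hk.ne'⟩
  obtain ⟨w, v, hwv⟩ := Int.isCoprime_iff_gcd_eq_one.2 hco₂
  have hw : h₂ * w ≡ 1 [ZMOD k] := Int.modEq_iff_dvd.2 ⟨v, by linear_combination -hwv⟩
  have hsaw_sum :=
    sum_range_mul_mul_eq_of_modEq periodic_saw_intCast_div periodic_saw_intCast_div hw h₁
  have hcot_sum := sum_range_mul_mul_eq_of_modEq periodic_cot_pi_mul_intCast_div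
    periodic_cot_pi_mul_intCast_div hw h₁
  push_cast [← mul_assoc] at hsaw_sum hcot_sum
  rw [sum_Icc_one_sub_one_eq_sum_range (by simp [saw_zero]),
    sum_Icc_one_sub_one_eq_sum_range (by simp [cot]), hsaw_sum, hcot_sum]
  simpa only [Int.cast_mul, ← mul_assoc] using sum_saw_mul_saw (k := k) (h₁ * w)

theorem dedekind_homogeneous (k : ℕ) (hk : 0 < k) (h₁ h₂ : ℤ)
    (hco₁ : Int.gcd h₁ k = 1) (hco₂ : Int.gcd h₂ k = 1) :
    ∑ a ∈ Finset.Icc 1 (k - 1), saw (a * (h₁ : ℝ) / k) * saw (a * (h₂ : ℝ) / k)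
      = 1 / (4 * k) *
          ∑ a ∈ Finset.Icc 1 (k - 1), cot (Real.pi * a * (h₁ : ℝ) / k) * cot (Real.pi * a * (h₂ : ℝ) / k) :=
  dedekind_homogeneous_general k hk h₁ h₂ hco₂
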